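/- arXiv:1905.08504 — 2 statements merged into one kernel-verified Lean document; each statement's English description precedes it below -/
import Mathlib

section
/- Unconditional energy dissipation of the semi-discrete SAV/Crank-Nicolson scheme in an abstract Hilbert space setting: let H be a real Hilbert space with inner product ⟨·,·⟩, let A, B : dom ⊂ H → H be symmetric positive semidefinite operators, λ, M, ν, Δt > 0. Suppose sequences φⁿ, μⁿ⁺¹ᐟ², rⁿ ∈ ℝ, uⁿ satisfy: (φⁿ⁺¹−φⁿ)/Δt = −M A μⁿ⁺¹ᐟ² − c with ⟨c, μⁿ⁺¹ᐟ²⟩ = ⟨g, uⁿ⁺¹ᐟ²⟩ for some g; μⁿ⁺¹ᐟ² = λ B φⁿ⁺¹ᐟ² + λ (rⁿ⁺¹ᐟ²/√E) f; (rⁿ⁺¹−rⁿ)/Δt = ⟨f, (φⁿ⁺¹−φⁿ)/Δt⟩/(2√E); (uⁿ⁺¹−uⁿ)/Δt = −ν D uⁿ⁺¹ᐟ² + g with D symmetric positive semidefinite and the pressure/incompressibility terms pairing to zero against uⁿ⁺¹ᐟ². Here xⁿ⁺¹ᐟ² := (xⁿ+xⁿ⁺¹)/2. Then the discrete energy Ẽⁿ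 = ½‖uⁿ‖² + (λ/2)⟨Bφⁿ, φⁿ⟩ + λ(rⁿ)² satisfies Ẽⁿ⁺¹ − Ẽⁿ = −Δt(M⟨Aμⁿ⁺¹ᐟ², μⁿ⁺¹ᐟ²⟩ + ν⟨Duⁿ⁺¹ᐟ², uⁿ⁺¹ᐟ²⟩) ≤ 0. -/
/-!
Pairing the phase equation with `μⁿ⁺¹ᐟ²` and the momentum equation with `uⁿ⁺¹ᐟ²` turns every
Crank–Nicolson difference `xⁿ⁺¹ - xⁿ` tested against the midpoint `xⁿ⁺¹ᐟ²` into a difference of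
quadratic energies; the auxiliary variable `r` is designed so that the explicit nonlinear term
`(rⁿ⁺¹ᐟ² / √E) f` contributes exactly `(rⁿ⁺¹)² - (rⁿ)²`. The convection and phase-field forcing
terms cancel by the coupling condition `⟪c, μ⟫ = ⟪g, u⟫`, leaving only the dissipation.
-/

open scoped RealInnerProductSpace

section

variable {H : Type*} [NormedAddCommGroup H] [InnerProductSpace ℝ H]

lemma inner_eq_mul_inner_of_inv_smul_eq {τ : ℝ} (hτ : τ ≠ 0) {x v : H} (h : τ⁻¹ • x = v)
    (w : H) : ⟪x, w⟫ = τ * ⟪v, w⟫ := by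
  rw [← h, real_inner_smul_left, mul_inv_cancel_left₀ hτ]

lemma inner_sub_map_midpoint {T : H →ₗ[ℝ] H} (hT : ∀ x y, ⟪T x, y⟫ = ⟪x, T y⟫) (x y : H) :
    ⟪x - y, T ((2:ℝ)⁻¹ • (y + x))⟫ = (⟪T x, x⟫ - ⟪T y, y⟫) / 2 := by
  have hxy : ⟪x, T y⟫ = ⟪y, T x⟫ := by rw [← hT, real_inner_comm]
  simp only [map_smul, map_add, real_inner_smul_right, inner_sub_left, inner_add_right,
    hT x x, hT y y, hxy]
  ring

lemma inner_sub_midpoint (x y : H) :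
    ⟪x - y, (2:ℝ)⁻¹ • (y + x)⟫ = (‖x‖ ^ 2 - ‖y‖ ^ 2) / 2 := by
  simpa only [LinearMap.id_apply, real_inner_self_eq_norm_sq] using
    inner_sub_map_midpoint (T := LinearMap.id) (fun _ _ => rfl) x y

variable {A B D : H →ₗ[ℝ] H} {M lam ν Δt s r₀ r₁ : ℝ} {φ₀ φ₁ u₀ u₁ μ c g f : H}

lemma inner_phase_step (hΔt : Δt ≠ 0) (h1 : Δt⁻¹ • (φ₁ - φ₀) = -(M • A μ) - c)
    (hc : ⟪c, μ⟫ = ⟪g, (2:ℝ)⁻¹ • (u₀ + u₁)⟫) :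
    ⟪φ₁ - φ₀, μ⟫ = -Δt * (M * ⟪A μ, μ⟫ + ⟪g, (2:ℝ)⁻¹ • (u₀ + u₁)⟫) := by
  rw [inner_eq_mul_inner_of_inv_smul_eq hΔt h1, inner_sub_left, inner_neg_left,
    real_inner_smul_left, hc]
  ring

lemma inner_sub_eq_of_scalar_auxiliary_step (hΔt : Δt ≠ 0) (hs : s ≠ 0)
    (h3 : (r₁ - r₀) / Δt = ⟪f, Δt⁻¹ • (φ₁ - φ₀)⟫ / (2 * s)) :
    ⟪f, φ₁ - φ₀⟫ = 2 * s * (r₁ - r₀) := by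
  rw [real_inner_smul_right] at h3
  field_simp at h3
  linear_combination -h3

lemma inner_chemical_potential_step (hB : ∀ x y, ⟪B x, y⟫ = ⟪x, B y⟫) (hΔt : Δt ≠ 0)
    (hs : s ≠ 0) (h2 : μ = lam • B ((2:ℝ)⁻¹ • (φ₀ + φ₁)) + (lam * ((r₀ + r₁) / 2) / s) • f)
    (h3 : (r₁ - r₀) / Δt = ⟪f, Δt⁻¹ • (φ₁ - φ₀)⟫ / (2 * s)) :
    ⟪φ₁ - φ₀, μ⟫ = lam / 2 * (⟪B φ₁, φ₁⟫ - ⟪B φ₀, φ₀⟫) + lam * (r₁ ^ 2 - r₀ ^ 2) := by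
  rw [h2, inner_add_right, real_inner_smul_right, real_inner_smul_right,
    inner_sub_map_midpoint hB, real_inner_comm f,
    inner_sub_eq_of_scalar_auxiliary_step hΔt hs h3]
  field_simp
  ring

lemma kinetic_energy_step (hΔt : Δt ≠ 0)
    (h4 : Δt⁻¹ • (u₁ - u₀) = -(ν • D ((2:ℝ)⁻¹ • (u₀ + u₁))) + g) :
    (‖u₁‖ ^ 2 - ‖u₀‖ ^ 2) / 2
      = -Δt * (ν * ⟪D ((2:ℝ)⁻¹ • (u₀ + u₁)), (2:ℝ)⁻¹ • (u₀ + u₁)⟫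
          - ⟪g, (2:ℝ)⁻¹ • (u₀ + u₁)⟫) := by
  rw [← inner_sub_midpoint, inner_eq_mul_inner_of_inv_smul_eq hΔt h4, inner_add_left,
    inner_neg_left, real_inner_smul_left]
  ring

end

theorem stmt_6_general {H : Type*} [NormedAddCommGroup H] [InnerProductSpace ℝ H]
    (A B D : H →ₗ[ℝ] H)
    (hApsd : ∀ x : H, 0 ≤ ⟪A x, x⟫)
    (hBsym : ∀ x y : H, ⟪B x, y⟫ = ⟪x, B y⟫)
    (hDpsd : ∀ x : H, 0 ≤ ⟪D x, x⟫)
    (lam M ν Δt : ℝ) (hM : 0 < M) (hν : 0 < ν) (hΔt : 0 < Δt)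
    (φ u μ c g f : ℕ → H) (r E : ℕ → ℝ) (hE : ∀ n, 0 < E n)
    (h1 : ∀ n, Δt⁻¹ • (φ (n+1) - φ n) = -(M • A (μ n)) - c n)
    (hc : ∀ n, ⟪c n, μ n⟫ = ⟪g n, (2:ℝ)⁻¹ • (u n + u (n+1))⟫)
    (h2 : ∀ n, μ n = lam • B ((2:ℝ)⁻¹ • (φ n + φ (n+1)))
        + (lam * ((r n + r (n+1)) / 2) / Real.sqrt (E n)) • f n)
    (h3 : ∀ n, (r (n+1) - r n) / Δt
        = ⟪f n, Δt⁻¹ • (φ (n+1) - φ n)⟫ / (2 * Real.sqrt (E n)))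
    (h4 : ∀ n, Δt⁻¹ • (u (n+1) - u n) = -(ν • D ((2:ℝ)⁻¹ • (u n + u (n+1)))) + g n) :
    ∀ n : ℕ,
      ((1/2) * ‖u (n+1)‖ ^ 2 + (lam / 2) * ⟪B (φ (n+1)), φ (n+1)⟫ + lam * (r (n+1)) ^ 2)
        - ((1/2) * ‖u n‖ ^ 2 + (lam / 2) * ⟪B (φ n), φ n⟫ + lam * (r n) ^ 2)
      = -Δt * (M * ⟪A (μ n), μ n⟫
          + ν * ⟪D ((2:ℝ)⁻¹ • (u n + u (n+1))), (2:ℝ)⁻¹ • (u n + u (n+1))⟫) ∧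
      -Δt * (M * ⟪A (μ n), μ n⟫
          + ν * ⟪D ((2:ℝ)⁻¹ • (u n + u (n+1))), (2:ℝ)⁻¹ • (u n + u (n+1))⟫) ≤ 0 := by
  intro n
  have hs : Real.sqrt (E n) ≠ 0 := (Real.sqrt_pos.2 (hE n)).ne'
  have phase := inner_phase_step hΔt.ne' (h1 n) (hc n)
  have chemical := inner_chemical_potential_step hBsym hΔt.ne' hs (h2 n) (h3 n)
  have kinetic := kinetic_energy_step hΔt.ne' (h4 n)
  refine ⟨by linear_combination kinetic + phase - chemical, ?_⟩
  rw [neg_mul, neg_nonpos]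
  exact mul_nonneg hΔt.le (add_nonneg (mul_nonneg hM.le (hApsd _)) (mul_nonneg hν.le (hDpsd _)))

/-- Unconditional energy dissipation of the semi-discrete SAV/Crank-Nicolson scheme
    in an abstract Hilbert space setting. Here `μ n` plays the role of μ^{n+1/2}. -/
theorem stmt_6 {H : Type*} [NormedAddCommGroup H] [InnerProductSpace ℝ H] [CompleteSpace H]
    (A B D : H →ₗ[ℝ] H)
    (hAsym : ∀ x y : H, ⟪A x, y⟫ = ⟪x, A y⟫) (hApsd : ∀ x : H, 0 ≤ ⟪A x, x⟫)
    (hBsym : ∀ x y : H, ⟪B x, y⟫ = ⟪x, B y⟫) (hBpsd : ∀ x : H, 0 ≤ ⟪B x, x⟫)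
    (hDsym : ∀ x y : H, ⟪D x, y⟫ = ⟪x, D y⟫) (hDpsd : ∀ x : H, 0 ≤ ⟪D x, x⟫)
    (lam M ν Δt : ℝ) (hlam : 0 < lam) (hM : 0 < M) (hν : 0 < ν) (hΔt : 0 < Δt)
    (φ u μ c g f : ℕ → H) (r E : ℕ → ℝ) (hE : ∀ n, 0 < E n)
    (h1 : ∀ n, Δt⁻¹ • (φ (n+1) - φ n) = -(M • A (μ n)) - c n)
    (hc : ∀ n, ⟪c n, μ n⟫ = ⟪g n, (2:ℝ)⁻¹ • (u n + u (n+1))⟫)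
    (h2 : ∀ n, μ n = lam • B ((2:ℝ)⁻¹ • (φ n + φ (n+1)))
        + (lam * ((r n + r (n+1)) / 2) / Real.sqrt (E n)) • f n)
    (h3 : ∀ n, (r (n+1) - r n) / Δt
        = ⟪f n, Δt⁻¹ • (φ (n+1) - φ n)⟫ / (2 * Real.sqrt (E n)))
    (h4 : ∀ n, Δt⁻¹ • (u (n+1) - u n) = -(ν • D ((2:ℝ)⁻¹ • (u n + u (n+1)))) + g n) :
    ∀ n : ℕ,
      ((1/2) * ‖u (n+1)‖ ^ 2 + (lam / 2) * ⟪B (φ (n+1)), φ (n+1)⟫ + lam * (r (n+1)) ^ 2)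
        - ((1/2) * ‖u n‖ ^ 2 + (lam / 2) * ⟪B (φ n), φ n⟫ + lam * (r n) ^ 2)
      = -Δt * (M * ⟪A (μ n), μ n⟫
          + ν * ⟪D ((2:ℝ)⁻¹ • (u n + u (n+1))), (2:ℝ)⁻¹ • (u n + u (n+1))⟫) ∧
      -Δt * (M * ⟪A (μ n), μ n⟫
          + ν * ⟪D ((2:ℝ)⁻¹ • (u n + u (n+1))), (2:ℝ)⁻¹ • (u n + u (n+1))⟫) ≤ 0 :=
  stmt_6_general A B D hApsd hBsym hDpsd lam M ν Δt hM hν hΔt φ u μ c g f r E hE h1 hc h2 h3 h4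
end

section
/- Lipschitz-type bound for the normalized SAV nonlinearity: let F(s) = (1/(4ε²))(1−s²)², fix K > 0 and δ > 0, and define G(φ) = F'(φ)/√(E₁(φ)+δ) where E₁(φ) = ∫_Ω F(φ) dx over a bounded domain Ω. Then for all φ, ψ ∈ L^∞(Ω) with ‖φ‖_∞ ≤ K and ‖ψ‖_∞ ≤ K, there exists a constant C = C(K, δ, ε, |Ω|) such that ‖G(φ) − G(ψ)‖_{L²(Ω)} ≤ C‖φ − ψ‖_{L²(Ω)}. -/
/-!
With `a = E₁(φ) + δ` and `b = E₁(ψ) + δ`, both at least `δ` because `F ≥ 0`, split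
`G(φ) - G(ψ) = (F'(φ) - F'(ψ)) / √a + F'(ψ) (1/√a - 1/√b)`.
On `[-K, K]` the `C²` potential `F` and its derivative are Lipschitz and `F'` is bounded, so the
first term is at most `L |φ - ψ| / √δ` pointwise. For the second, `x ↦ 1/√x` is Lipschitz on
`[δ, ∞)`, and by Cauchy–Schwarz `(a - b)² = (∫ F(φ) - F(ψ))² ≤ |Ω| ∫ (F(φ) - F(ψ))²
≤ |Ω| L² ‖φ - ψ‖²_{L²}`.
-/

open MeasureTheory

/-- The double-well potential F(s) = (1 − s²)²/(4ε²). -/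
noncomputable def Fpot (ε s : ℝ) : ℝ := (1 - s ^ 2) ^ 2 / (4 * ε ^ 2)

/-- E₁(φ) = ∫_Ω F(φ) dμ. -/
noncomputable def E1fun {Ω : Type*} [MeasurableSpace Ω] (μ : Measure Ω) (ε : ℝ)
    (φ : Ω → ℝ) : ℝ := ∫ x, Fpot ε (φ x) ∂μ

/-- The normalized SAV nonlinearity G(φ) = F'(φ)/√(E₁(φ) + δ). -/
noncomputable def Gfun {Ω : Type*} [MeasurableSpace Ω] (μ : Measure Ω) (ε δ : ℝ)
    (φ : Ω → ℝ) (x : Ω) : ℝ :=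
  deriv (Fpot ε) (φ x) / Real.sqrt (E1fun μ ε φ + δ)

open Set

lemma LipschitzOnWith.sq_sub_le {f : ℝ → ℝ} {L : NNReal} {s : Set ℝ} (hf : LipschitzOnWith L f s)
    {p q : ℝ} (hp : p ∈ s) (hq : q ∈ s) : (f p - f q) ^ 2 ≤ L ^ 2 * (p - q) ^ 2 := by
  have h := hf.dist_le_mul p hp q hq
  rw [Real.dist_eq, Real.dist_eq] at h
  rw [← sq_abs, ← sq_abs (p - q), ← mul_pow]
  exact pow_le_pow_left₀ (abs_nonneg _) h 2

lemma LocallyLipschitz.exists_lipschitzOnWith_Icc {f : ℝ → ℝ} (hf : LocallyLipschitz f)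
    (a b : ℝ) : ∃ L, LipschitzOnWith L f (Icc a b) :=
  hf.locallyLipschitzOn.exists_lipschitzOnWith_of_compact isCompact_Icc

lemma sq_inv_sqrt_sub_inv_sqrt_le {a b δ : ℝ} (hδ : 0 < δ) (ha : δ ≤ a) (hb : δ ≤ b) :
    ((√a)⁻¹ - (√b)⁻¹) ^ 2 ≤ (a - b) ^ 2 / (4 * δ ^ 3) := by
  have hδa : √δ ≤ √a := Real.sqrt_le_sqrt ha
  have hδb : √δ ≤ √b := Real.sqrt_le_sqrt hb
  have hsδ : 0 < √δ := Real.sqrt_pos.2 hδ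
  have hsa : 0 < √a := hsδ.trans_le hδa
  have hsb : 0 < √b := hsδ.trans_le hδb
  -- `a - b = (√a - √b)(√a + √b)` and each of `√a, √b` is at least `√δ`
  have hab : a - b = √a ^ 2 - √b ^ 2 := by
    rw [Real.sq_sqrt (hδ.le.trans ha), Real.sq_sqrt (hδ.le.trans hb)]
  have key : (a - b) ^ 2 = ((√a)⁻¹ - (√b)⁻¹) ^ 2 * (√a * √b * (√a + √b)) ^ 2 := by
    rw [hab]
    field_simp
    ring
  have hlow : 4 * δ ^ 3 ≤ (√a * √b * (√a + √b)) ^ 2 := by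
    calc 4 * δ ^ 3 = 4 * (√δ ^ 2) ^ 3 := by rw [Real.sq_sqrt hδ.le]
      _ = (√δ * √δ * (√δ + √δ)) ^ 2 := by ring
      _ ≤ _ := by gcongr
  rw [key, le_div_iff₀ (by positivity)]
  exact mul_le_mul_of_nonneg_left hlow (sq_nonneg _)

lemma sq_div_sqrt_sub_div_sqrt_le {p q a b δ : ℝ} (hδ : 0 < δ) (ha : δ ≤ a) (hb : δ ≤ b) :
    (p / √a - q / √b) ^ 2 ≤ 2 * (p - q) ^ 2 / δ + q ^ 2 * (a - b) ^ 2 / (2 * δ ^ 3) := by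
  have hsplit : p / √a - q / √b = (p - q) / √a + q * ((√a)⁻¹ - (√b)⁻¹) := by ring
  have hfirst : ((p - q) / √a) ^ 2 ≤ (p - q) ^ 2 / δ := by
    rw [div_pow, Real.sq_sqrt (hδ.le.trans ha)]
    exact div_le_div_of_nonneg_left (sq_nonneg _) hδ ha
  have hsecond : (q * ((√a)⁻¹ - (√b)⁻¹)) ^ 2 ≤ q ^ 2 * (a - b) ^ 2 / (4 * δ ^ 3) := by
    rw [mul_pow, mul_div_assoc]
    exact mul_le_mul_of_nonneg_left (sq_inv_sqrt_sub_inv_sqrt_le hδ ha hb) (sq_nonneg q)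
  rw [hsplit]
  calc _ ≤ 2 * ((p - q) / √a) ^ 2 + 2 * (q * ((√a)⁻¹ - (√b)⁻¹)) ^ 2 := by
        nlinarith [sq_nonneg ((p - q) / √a - q * ((√a)⁻¹ - (√b)⁻¹))]
    _ ≤ 2 * ((p - q) ^ 2 / δ) + 2 * (q ^ 2 * (a - b) ^ 2 / (4 * δ ^ 3)) := by gcongr
    _ = _ := by field_simp; ring

section Integral

variable {Ω : Type*} [MeasurableSpace Ω] (μ : Measure Ω) [IsFiniteMeasure μ]

lemma sq_integral_le_measureReal_mul_integral_sq {f : Ω → ℝ} (hf : MemLp f 2 μ) :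
    (∫ x, f x ∂μ) ^ 2 ≤ μ.real univ * ∫ x, f x ^ 2 ∂μ := by
  have hint : Integrable f μ := hf.integrable one_le_two
  -- the quadratic `t ↦ ∫ (f - t)²` is nonnegative, so its discriminant is nonpositive
  have hquad : ∀ t : ℝ, 0 ≤ μ.real univ * (t * t) + (-2 * ∫ x, f x ∂μ) * t + ∫ x, f x ^ 2 ∂μ := by
    intro t
    calc 0 ≤ ∫ x, (f x - t) ^ 2 ∂μ := integral_nonneg fun _ => sq_nonneg _
      _ = ∫ x, (f x ^ 2 + (-2 * t) * f x + t * t) ∂μ := by congr 1; ext x; ring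
      _ = _ := by
        have hlin : Integrable (fun x => f x ^ 2 + (-2 * t) * f x) μ :=
          hf.integrable_sq.add (hint.const_mul _)
        rw [integral_add hlin (integrable_const _),
          integral_add hf.integrable_sq (hint.const_mul _), integral_const_mul, integral_const,
          smul_eq_mul]
        ring
  have := discrim_le_zero hquad
  rw [discrim] at this
  linarith

lemma integrable_sq_of_abs_le {f : Ω → ℝ} (hf : Measurable f) {K : ℝ} (hfK : ∀ x, |f x| ≤ K) :
    Integrable (fun x => f x ^ 2) μ :=
  (MemLp.of_bound (p := 2) hf.aestronglyMeasurable K (ae_of_all _ hfK)).integrable_sq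

lemma memLp_comp_of_abs_le {g : ℝ → ℝ} (hg : Continuous g) {φ : Ω → ℝ} (hφ : Measurable φ) {K : ℝ}
    (hφK : ∀ x, |φ x| ≤ K) (p : ENNReal) : MemLp (fun x => g (φ x)) p μ := by
  obtain ⟨C, hC⟩ := (isCompact_Icc (a := -K) (b := K)).exists_bound_of_continuousOn hg.continuousOn
  exact .of_bound (hg.measurable.comp hφ).aestronglyMeasurable C
    (ae_of_all _ fun x => hC _ (abs_le.1 (hφK x)))

end Integral

section SAV

variable {Ω : Type*} [MeasurableSpace Ω] (μ : Measure Ω)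

noncomputable def savNonlinearity (F : ℝ → ℝ) (δ : ℝ) (φ : Ω → ℝ) (x : Ω) : ℝ :=
  deriv F (φ x) / √(∫ y, F (φ y) ∂μ + δ)

variable [IsFiniteMeasure μ]

theorem integral_sq_savNonlinearity_sub_le {F : ℝ → ℝ} {K δ M : ℝ} {L₀ L₁ : NNReal}
    (hF : Continuous F) (hF0 : ∀ s, 0 ≤ F s) (hδ : 0 < δ)
    (hL₀ : LipschitzOnWith L₀ F (Icc (-K) K)) (hL₁ : LipschitzOnWith L₁ (deriv F) (Icc (-K) K))
    (hM : ∀ s ∈ Icc (-K) K, |deriv F s| ≤ M)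
    {φ ψ : Ω → ℝ} (hφ : Measurable φ) (hψ : Measurable ψ)
    (hφK : ∀ x, |φ x| ≤ K) (hψK : ∀ x, |ψ x| ≤ K) :
    ∫ x, (savNonlinearity μ F δ φ x - savNonlinearity μ F δ ψ x) ^ 2 ∂μ
      ≤ (2 * L₁ ^ 2 / δ + M ^ 2 * L₀ ^ 2 * μ.real univ ^ 2 / (2 * δ ^ 3))
        * ∫ x, (φ x - ψ x) ^ 2 ∂μ := by
  set V := μ.real univ
  set S := ∫ x, (φ x - ψ x) ^ 2 ∂μ
  set a := ∫ y, F (φ y) ∂μ + δ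
  set b := ∫ y, F (ψ y) ∂μ + δ
  have hφs : ∀ x, φ x ∈ Icc (-K) K := fun x => abs_le.1 (hφK x)
  have hψs : ∀ x, ψ x ∈ Icc (-K) K := fun x => abs_le.1 (hψK x)
  have ha : δ ≤ a := le_add_of_nonneg_left (integral_nonneg fun _ => hF0 _)
  have hb : δ ≤ b := le_add_of_nonneg_left (integral_nonneg fun _ => hF0 _)
  have hS : Integrable (fun x => (φ x - ψ x) ^ 2) μ :=
    integrable_sq_of_abs_le μ (hφ.sub hψ) (K := K + K) fun x =>
      (abs_sub _ _).trans (add_le_add (hφK x) (hψK x))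
  have hFφ := memLp_comp_of_abs_le μ hF hφ hφK 2
  have hFψ := memLp_comp_of_abs_le μ hF hψ hψK 2
  have hab : (a - b) ^ 2 ≤ V * (L₀ ^ 2 * S) := by
    have hdiff : a - b = ∫ x, (F (φ x) - F (ψ x)) ∂μ := by
      rw [integral_sub (hFφ.integrable one_le_two) (hFψ.integrable one_le_two)]
      ring
    rw [hdiff, ← integral_const_mul]
    refine (sq_integral_le_measureReal_mul_integral_sq μ (hFφ.sub hFψ)).trans ?_
    exact mul_le_mul_of_nonneg_left (integral_mono_of_nonneg (ae_of_all _ fun _ => sq_nonneg _)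
      (hS.const_mul _) (ae_of_all _ fun x => hL₀.sq_sub_le (hφs x) (hψs x))) measureReal_nonneg
  have hpt : ∀ x, (savNonlinearity μ F δ φ x - savNonlinearity μ F δ ψ x) ^ 2
      ≤ 2 * L₁ ^ 2 / δ * (φ x - ψ x) ^ 2 + M ^ 2 * (a - b) ^ 2 / (2 * δ ^ 3) := by
    intro x
    refine (sq_div_sqrt_sub_div_sqrt_le hδ ha hb).trans ?_
    have hL := hL₁.sq_sub_le (hφs x) (hψs x)
    obtain ⟨hM₁, hM₂⟩ := abs_le.1 (hM _ (hψs x))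
    have hq : deriv F (ψ x) ^ 2 ≤ M ^ 2 := sq_le_sq' hM₁ hM₂
    calc _ ≤ 2 * (L₁ ^ 2 * (φ x - ψ x) ^ 2) / δ + M ^ 2 * (a - b) ^ 2 / (2 * δ ^ 3) := by gcongr
      _ = _ := by ring
  calc _ ≤ ∫ x, (2 * L₁ ^ 2 / δ * (φ x - ψ x) ^ 2 + M ^ 2 * (a - b) ^ 2 / (2 * δ ^ 3)) ∂μ :=
        integral_mono_of_nonneg (ae_of_all _ fun _ => sq_nonneg _)
          ((hS.const_mul _).add (integrable_const _)) (ae_of_all _ hpt)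
    _ = 2 * L₁ ^ 2 / δ * S + V * (M ^ 2 * (a - b) ^ 2 / (2 * δ ^ 3)) := by
        rw [integral_add (hS.const_mul _) (integrable_const _), integral_const_mul, integral_const,
          smul_eq_mul]
    _ ≤ 2 * L₁ ^ 2 / δ * S + V * (M ^ 2 * (V * (L₀ ^ 2 * S)) / (2 * δ ^ 3)) := by gcongr
    _ = _ := by ring

theorem exists_integral_sq_savNonlinearity_sub_le {F : ℝ → ℝ} (hF : ContDiff ℝ 2 F)
    (hF0 : ∀ s, 0 ≤ F s) (K : ℝ) {δ : ℝ} (hδ : 0 < δ) :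
    ∃ C > 0, ∀ φ ψ : Ω → ℝ, Measurable φ → Measurable ψ →
      (∀ x, |φ x| ≤ K) → (∀ x, |ψ x| ≤ K) →
      ∫ x, (savNonlinearity μ F δ φ x - savNonlinearity μ F δ ψ x) ^ 2 ∂μ
        ≤ C * ∫ x, (φ x - ψ x) ^ 2 ∂μ := by
  obtain ⟨L₀, hL₀⟩ := (hF.of_le one_le_two).locallyLipschitz.exists_lipschitzOnWith_Icc (-K) K
  obtain ⟨L₁, hL₁⟩ := (hF.deriv' (n := 1)).locallyLipschitz.exists_lipschitzOnWith_Icc (-K) K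
  obtain ⟨M, hM⟩ := (isCompact_Icc (a := -K) (b := K)).exists_bound_of_continuousOn
    (hF.continuous_deriv one_le_two).continuousOn
  refine ⟨2 * L₁ ^ 2 / δ + M ^ 2 * L₀ ^ 2 * μ.real univ ^ 2 / (2 * δ ^ 3) + 1, by positivity,
    fun φ ψ hφ hψ hφK hψK => ?_⟩
  refine (integral_sq_savNonlinearity_sub_le μ hF.continuous hF0 hδ hL₀ hL₁ hM hφ hψ hφK hψK).trans
    (mul_le_mul_of_nonneg_right (le_add_of_nonneg_right zero_le_one)
      (integral_nonneg fun _ => sq_nonneg _))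

end SAV

lemma contDiff_Fpot (ε : ℝ) : ContDiff ℝ 2 (Fpot ε) := by
  unfold Fpot
  fun_prop

lemma Fpot_nonneg (ε s : ℝ) : 0 ≤ Fpot ε s := by
  unfold Fpot
  positivity

lemma Gfun_eq_savNonlinearity {Ω : Type*} [MeasurableSpace Ω] (μ : Measure Ω) (ε δ : ℝ) :
    Gfun μ ε δ = savNonlinearity μ (Fpot ε) δ :=
  rfl

theorem stmt_12_general {Ω : Type*} [MeasurableSpace Ω] (μ : Measure Ω) [IsFiniteMeasure μ]
    (ε K δ : ℝ) (hδ : 0 < δ) :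
    ∃ C > 0, ∀ φ ψ : Ω → ℝ, Measurable φ → Measurable ψ →
      (∀ x, |φ x| ≤ K) → (∀ x, |ψ x| ≤ K) →
      ∫ x, (Gfun μ ε δ φ x - Gfun μ ε δ ψ x) ^ 2 ∂μ
        ≤ C ^ 2 * ∫ x, (φ x - ψ x) ^ 2 ∂μ := by
  simp only [Gfun_eq_savNonlinearity]
  obtain ⟨C, hC, hbound⟩ :=
    exists_integral_sq_savNonlinearity_sub_le μ (contDiff_Fpot ε) (Fpot_nonneg ε) K hδ
  refine ⟨√C, Real.sqrt_pos.2 hC, ?_⟩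
  rw [Real.sq_sqrt hC.le]
  exact hbound

/-- Lipschitz-type bound for the normalized SAV nonlinearity under uniform L^∞ bounds. -/
theorem stmt_12 {Ω : Type*} [MeasurableSpace Ω] (μ : Measure Ω) [IsFiniteMeasure μ]
    (ε K δ : ℝ) (hε : 0 < ε) (hK : 0 < K) (hδ : 0 < δ) :
    ∃ C > 0, ∀ φ ψ : Ω → ℝ, Measurable φ → Measurable ψ →
      (∀ x, |φ x| ≤ K) → (∀ x, |ψ x| ≤ K) →
      ∫ x, (Gfun μ ε δ φ x - Gfun μ ε δ ψ x) ^ 2 ∂μ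
        ≤ C ^ 2 * ∫ x, (φ x - ψ x) ^ 2 ∂μ :=
  stmt_12_general μ ε K δ hδ
end
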